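/- Suppose Δ ≠ 0. Then the point C = ((α1·a1 + β3·a2 + β2·a3)/(2Δ), (β3·a1 + α2·a2 + β1·a3)/(2Δ), (β2·a1 + β1·a2 + α3·a3)/(2Δ)) lies on all six B-midplanes of the Standard tetrahedron X0X1X2X3; that is, (X_j − X_i)·_B (C − (X_i + X_j)/2) = 0 for all 0 ≤ i < j ≤ 3. -/

import Mathlib

open Matrix

/-- The `B`-scalar product of two vectors in `F³`: `u ·_B v = u B vᵀ`. -/
def bdot {F : Type*} [Field F] (B : Matrix (Fin 3) (Fin 3) F) (u v : Fin 3 → F) : F :=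
  u ⬝ᵥ B.mulVec v

/-- The Standard tetrahedron `X0 = (0,0,0)`, `X1 = (1,0,0)`, `X2 = (0,1,0)`, `X3 = (0,0,1)`. -/
def stdTet {F : Type*} [Field F] : Fin 4 → (Fin 3 → F) :=
  ![![0, 0, 0], ![1, 0, 0], ![0, 1, 0], ![0, 0, 1]]

/-! The point `C` is `(2Δ)⁻¹ · adj B · d`, where `d` is the diagonal of `B`, so `B C = d / 2`.
For a symmetric form, `(v - u) ·_B (C - (u + v)/2) = (v - u) · B C - (Q v - Q u)/2` with
`Q x = x ·_B x`. Every vertex `X` of the Standard tetrahedron satisfies `X · d = Q X`, so both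
terms agree and all six midplane equations hold. -/

section

variable {F : Type*} [Field F] {B : Matrix (Fin 3) (Fin 3) F}

theorem bdot_comm (hB : B.IsSymm) (u v : Fin 3 → F) : bdot B u v = bdot B v u := by
  rw [bdot, bdot, dotProduct_mulVec, ← mulVec_transpose, hB.eq, dotProduct_comm]

theorem bdot_sub_midpoint (hB : B.IsSymm) (u v C : Fin 3 → F) :
    bdot B (v - u) (C - (2 : F)⁻¹ • (u + v)) =
      (v - u) ⬝ᵥ (B *ᵥ C) - 2⁻¹ * (bdot B v v - bdot B u u) := by
  have huv := bdot_comm hB u v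
  simp only [bdot, mulVec_sub, mulVec_smul, mulVec_add, sub_dotProduct, dotProduct_sub,
    dotProduct_smul, dotProduct_add, smul_eq_mul] at huv ⊢
  linear_combination 2⁻¹ * huv

theorem bdot_sub_midpoint_eq_zero (hB : B.IsSymm) {u v C : Fin 3 → F}
    (hu : u ⬝ᵥ (B *ᵥ C) = 2⁻¹ * bdot B u u) (hv : v ⬝ᵥ (B *ᵥ C) = 2⁻¹ * bdot B v v) :
    bdot B (v - u) (C - (2 : F)⁻¹ • (u + v)) = 0 := by
  rw [bdot_sub_midpoint hB, sub_dotProduct, hu, hv]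
  ring

theorem Matrix.mulVec_inv_two_det_smul_adjugate_mulVec {n : Type*} [Fintype n] [DecidableEq n]
    {A : Matrix n n F} (hA : A.det ≠ 0) (w : n → F) :
    A *ᵥ ((2 * A.det)⁻¹ • (A.adjugate *ᵥ w)) = (2 : F)⁻¹ • w := by
  rw [mulVec_smul, mulVec_mulVec, mul_adjugate, smul_mulVec, one_mulVec, smul_smul, mul_inv,
    mul_assoc, inv_mul_cancel₀ hA, mul_one]

theorem stdTet_dotProduct_diag (k : Fin 4) :
    stdTet k ⬝ᵥ B.diag = bdot B (stdTet k) (stdTet k) := by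
  fin_cases k <;> simp [stdTet, bdot, mulVec, dotProduct, Fin.sum_univ_three]

end

theorem circumcentre_standard_tetrahedron_general {F : Type*} [Field F]
    (B : Matrix (Fin 3) (Fin 3) F) (hB : B.IsSymm) (hΔ : B.det ≠ 0)
    (C : Fin 3 → F)
    (hC : C = ![(B.adjugate 0 0 * B 0 0 + B.adjugate 0 1 * B 1 1 + B.adjugate 0 2 * B 2 2) / (2 * B.det),
                (B.adjugate 0 1 * B 0 0 + B.adjugate 1 1 * B 1 1 + B.adjugate 1 2 * B 2 2) / (2 * B.det),
                (B.adjugate 0 2 * B 0 0 + B.adjugate 1 2 * B 1 1 + B.adjugate 2 2 * B 2 2) / (2 * B.det)]) :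
    ∀ i j : Fin 4, i < j →
      bdot B (stdTet j - stdTet i) (C - (2 : F)⁻¹ • (stdTet i + stdTet j)) = 0 := by
  have hC' : C = (2 * B.det)⁻¹ • (B.adjugate *ᵥ B.diag) := by
    have hadj := hB.adjugate.apply
    subst hC
    ext k
    fin_cases k <;> simp [mulVec, dotProduct, Fin.sum_univ_three, hadj 0 1, hadj 0 2, hadj 1 2,
      div_eq_inv_mul]
  have hvertex (k : Fin 4) :
      stdTet k ⬝ᵥ (B *ᵥ C) = 2⁻¹ * bdot B (stdTet k) (stdTet k) := by
    rw [hC', mulVec_inv_two_det_smul_adjugate_mulVec hΔ, dotProduct_smul,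
      stdTet_dotProduct_diag, smul_eq_mul]
  exact fun i j _ ↦ bdot_sub_midpoint_eq_zero hB (hvertex i) (hvertex j)

/-- If `Δ = det B ≠ 0`, the explicit point
`C = ((α1·a1 + β3·a2 + β2·a3)/(2Δ), (β3·a1 + α2·a2 + β1·a3)/(2Δ), (β2·a1 + β1·a2 + α3·a3)/(2Δ))`
(where `a1, a2, a3` are the diagonal entries of `B` and the `α`'s, `β`'s are the
entries of the adjugate of `B`) lies on all six B-midplanes of the Standard tetrahedron. -/
theorem circumcentre_standard_tetrahedron {F : Type*} [Field F]
    (h2 : (2 : F) ≠ 0) (h3 : (3 : F) ≠ 0)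
    (B : Matrix (Fin 3) (Fin 3) F) (hB : B.IsSymm) (hΔ : B.det ≠ 0)
    (C : Fin 3 → F)
    (hC : C = ![(B.adjugate 0 0 * B 0 0 + B.adjugate 0 1 * B 1 1 + B.adjugate 0 2 * B 2 2) / (2 * B.det),
                (B.adjugate 0 1 * B 0 0 + B.adjugate 1 1 * B 1 1 + B.adjugate 1 2 * B 2 2) / (2 * B.det),
                (B.adjugate 0 2 * B 0 0 + B.adjugate 1 2 * B 1 1 + B.adjugate 2 2 * B 2 2) / (2 * B.det)]) :
    ∀ i j : Fin 4, i < j →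
      bdot B (stdTet j - stdTet i) (C - (2 : F)⁻¹ • (stdTet i + stdTet j)) = 0 :=
  circumcentre_standard_tetrahedron_general B hB hΔ C hC
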